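/- arXiv:2106.09110 — 5 statements merged into one kernel-verified Lean document; each statement's English description precedes it below -/
import Mathlib

section
/- If the intervention rule G = (Q̄, μ, η) is σ-admissible, then Q̄^μ(s,a) ≤ Q̄(s,a) + σ/(1−γ) for all s ∈ S_safe and a ∈ A, where Q̄^μ is the state-action value function of μ in the cost-based MDP M̄. -/
open scoped BigOperators Classical

noncomputable section

namespace SafeRL

variable {S A : Type*} [Fintype S] [Fintype A] [Nonempty A]

/-- `d` is a probability distribution on the finite type `S`. -/
def IsDist (d : S → ℝ) : Prop := (∀ s, 0 ≤ d s) ∧ ∑ s, d s = 1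

/-- `P` is a transition kernel. -/
def IsKernel (P : S → A → S → ℝ) : Prop := ∀ s a, IsDist (P s a)

/-- `π` is a (Markov stationary stochastic) policy. -/
def IsPolicy (π : S → A → ℝ) : Prop := ∀ s, (∀ a, 0 ≤ π s a) ∧ ∑ a, π s a = 1

/-- Point mass at `s`. -/
def pureDist (s : S) : S → ℝ := fun s' => if s' = s then 1 else 0

/-- One-step state-distribution update under policy `π`. -/
def step (P : S → A → S → ℝ) (π : S → A → ℝ) (d : S → ℝ) : S → ℝ :=
  fun s' => ∑ s, ∑ a, d s * π s a * P s a s'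

/-- State distribution at time `t` when running `π` from `d0`. -/
def distAt (P : S → A → S → ℝ) (π : S → A → ℝ) (d0 : S → ℝ) (t : ℕ) : S → ℝ :=
  (step P π)^[t] d0

/-- Expected discounted return `V^π(d0)` of policy `π` from initial distribution `d0`. -/
def value (P : S → A → S → ℝ) (π : S → A → ℝ) (r : S → A → ℝ) (γ : ℝ) (d0 : S → ℝ) : ℝ :=
  ∑' t : ℕ, γ ^ t * ∑ s, ∑ a, distAt P π d0 t s * π s a * r s a

/-- State value function `V^π(s)`. -/
def vf (P : S → A → S → ℝ) (π : S → A → ℝ) (r : S → A → ℝ) (γ : ℝ) (s : S) : ℝ :=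
  value P π r γ (pureDist s)

/-- State-action value function `Q^π(s,a)`. -/
def qf (P : S → A → S → ℝ) (π : S → A → ℝ) (r : S → A → ℝ) (γ : ℝ) (s : S) (a : A) : ℝ :=
  r s a + γ * ∑ s', P s a s' * vf P π r γ s'

/-- The cost function `c(s,a) = 1{s = s_▷}` of the cost-based MDP. -/
def cost (sbad : S) : S → A → ℝ := fun s _ => if s = sbad then 1 else 0

/-- Discounted state distribution `d^π(s)`. -/
def dsd (P : S → A → S → ℝ) (π : S → A → ℝ) (γ : ℝ) (d0 : S → ℝ) (s : S) : ℝ :=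
  (1 - γ) * ∑' t : ℕ, γ ^ t * distAt P π d0 t s

/-- Discounted state-action distribution `d^π(s,a)`. -/
def dsa (P : S → A → S → ℝ) (π : S → A → ℝ) (γ : ℝ) (d0 : S → ℝ) (s : S) (a : A) : ℝ :=
  (1 - γ) * ∑' t : ℕ, γ ^ t * distAt P π d0 t s * π s a

/-- Probability of the `h`-step trajectory prefix `f` when running `π` from `d`. -/
def prefProb (P : S → A → S → ℝ) (π : S → A → ℝ) :
    (S → ℝ) → (h : ℕ) → (Fin h → S × A) → ℝ
  | _, 0, _ => 1
  | d, h + 1, f =>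
      d (f 0).1 * π (f 0).1 (f 0).2 *
        prefProb P π (P (f 0).1 (f 0).2) h (fun i => f i.succ)

/-- Probability that the `h`-step trajectory prefix generated by `π` from `d0` satisfies `E`. -/
def eventProb (P : S → A → S → ℝ) (π : S → A → ℝ) (d0 : S → ℝ) (h : ℕ)
    (E : (Fin h → S × A) → Prop) : ℝ :=
  ∑ f : Fin h → S × A, if E f then prefProb P π d0 h f else 0

/-- `Q̄(s,μ) = E_{a ∼ μ(·|s)} Q̄(s,a)`. -/
def Qpol (Qb : S → A → ℝ) (μ : S → A → ℝ) (s : S) : ℝ := ∑ a, μ s a * Qb s a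

/-- Advantage-like function `Ā(s,a) = Q̄(s,a) − Q̄(s,μ)`. -/
def Abar (Qb : S → A → ℝ) (μ : S → A → ℝ) (s : S) (a : A) : ℝ := Qb s a - Qpol Qb μ s

/-- The intervention set `I = {(s,a) ∈ S_safe × A : Ā(s,a) > η}`. -/
def intSet (Qb : S → A → ℝ) (μ : S → A → ℝ) (η : ℝ) (sbad sabs : S) : Set (S × A) :=
  {p | p.1 ≠ sbad ∧ p.1 ≠ sabs ∧ η < Abar Qb μ p.1 p.2}

/-- The shielded policy `π' = G(π)`. -/
def shield (π μ : S → A → ℝ) (I : Set (S × A)) (sbad sabs : S) : S → A → ℝ :=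
  fun s a =>
    if s = sbad ∨ s = sabs then π s a
    else (if (s, a) ∈ I then 0 else π s a)
      + μ s a * (1 - ∑ a', if (s, a') ∈ I then π s a' else 0)

/-- `σ`-admissibility of the intervention rule `(Q̄, μ, η)` (the condition does not
involve `η`): on safe states, `Q̄ ∈ [0,γ]` and
`c(s,a) + γ E_{s'∼P(·|s,a)}[Q̄(s',μ)] ≤ Q̄(s,a) + σ`. -/
def SigmaAdmissible (P : S → A → S → ℝ) (Qb : S → A → ℝ) (μ : S → A → ℝ)
    (γ σ : ℝ) (sbad sabs : S) : Prop :=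
  ∀ s, s ≠ sbad → s ≠ sabs → ∀ a : A,
    (0 ≤ Qb s a ∧ Qb s a ≤ γ) ∧
    cost sbad s a + γ * ∑ s', P s a s' * Qpol Qb μ s' ≤ Qb s a + σ

/-- Transition kernel of the absorbing MDP `M̃`; `none` plays the role of `s_†`. -/
def Ptil (P : S → A → S → ℝ) (I : Set (S × A)) : Option S → A → Option S → ℝ :=
  fun s? a s'? =>
    match s? with
    | none => if s'? = none then 1 else 0
    | some s =>
        if (s, a) ∈ I then (if s'? = none then 1 else 0)
        else
          match s'? with
          | none => 0
          | some s' => P s a s'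

/-- Reward of the absorbing MDP `M̃` with penalty `Rt` on the intervention set. -/
def rtil (r : S → A → ℝ) (I : Set (S × A)) (Rt : ℝ) : Option S → A → ℝ :=
  fun s? a =>
    match s? with
    | none => 0
    | some s => if (s, a) ∈ I then Rt else r s a

/-- Extension of a policy on `S` to `S ∪ {s_†}`, uniform at `s_†`. -/
def extPol (π : S → A → ℝ) : Option S → A → ℝ :=
  fun s? a =>
    match s? with
    | none => (Fintype.card A : ℝ)⁻¹
    | some s => π s a

/-- Extension of an initial distribution on `S` to `S ∪ {s_†}`. -/
def extDist (d0 : S → ℝ) : Option S → ℝ :=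
  fun s? => match s? with | none => 0 | some s => d0 s

/-- `P_G(π)`: discounted probability that a trajectory of `π` in `M` visits `I`. -/
def PG (P : S → A → S → ℝ) (π : S → A → ℝ) (d0 : S → ℝ) (γ : ℝ)
    (I : Set (S × A)) : ℝ :=
  (1 - γ) * ∑' h : ℕ, γ ^ h * eventProb P π d0 h (fun f => ∃ i, f i ∈ I)

/-- The deterministic policy associated to a map `g : S → A`. -/
def detPol (g : S → A) : S → A → ℝ := fun s a => if a = g s then 1 else 0

/-- Bellman optimality operator `T̄` of the cost-based MDP. -/
def Tbar (P : S → A → S → ℝ) (sbad : S) (γ : ℝ) (Q : S → A → ℝ) : S → A → ℝ :=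
  fun s a =>
    cost sbad s a +
      γ * ∑ s', P s a s' * Finset.univ.inf' Finset.univ_nonempty (fun a' => Q s' a')


section Helpers

variable {P : S → A → S → ℝ} {π : S → A → ℝ} {r : S → A → ℝ} {γ : ℝ}

lemma pureDist_isDist (s : S) : IsDist (pureDist (S := S) s) := by
  constructor
  · intro s'; unfold pureDist; split <;> norm_num
  · simp [pureDist]

lemma sum_pureDist_mul (x : S) (g : S → ℝ) : ∑ s', pureDist x s' * g s' = g x := by
  rw [Finset.sum_eq_single x]
  · simp [pureDist]
  · intro b _ hb; simp [pureDist, hb]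
  · intro h; exact absurd (Finset.mem_univ x) h

lemma step_isDist (hP : IsKernel P) (hπ : IsPolicy π) {d : S → ℝ} (hd : IsDist d) :
    IsDist (step P π d) := by
  constructor
  · intro s'
    apply Finset.sum_nonneg; intro s _
    apply Finset.sum_nonneg; intro a _
    exact mul_nonneg (mul_nonneg (hd.1 s) ((hπ s).1 a)) ((hP s a).1 s')
  · simp only [step]
    rw [Finset.sum_comm]
    have h1 : ∀ s : S, ∑ s' : S, ∑ a : A, d s * π s a * P s a s' = d s := by
      intro s
      rw [Finset.sum_comm]
      have h2 : ∀ a : A, ∑ s' : S, d s * π s a * P s a s' = d s * π s a := by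
        intro a; rw [← Finset.mul_sum, (hP s a).2, mul_one]
      simp only [h2, ← Finset.mul_sum, (hπ s).2, mul_one]
    simp only [h1, hd.2]

lemma distAt_isDist (hP : IsKernel P) (hπ : IsPolicy π) {d : S → ℝ} (hd : IsDist d)
    (t : ℕ) : IsDist (distAt P π d t) := by
  induction t with
  | zero => exact hd
  | succ n ih =>
      have h : distAt P π d (n + 1) = step P π (distAt P π d n) := by
        simp [distAt, Function.iterate_succ_apply']
      rw [h]; exact step_isDist hP hπ ih

lemma erw_nonneg (hπ : IsPolicy π) {d : S → ℝ} (hd : IsDist d)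
    (hr0 : ∀ s a, 0 ≤ r s a) :
    0 ≤ ∑ s, ∑ a, d s * π s a * r s a := by
  apply Finset.sum_nonneg; intro s _
  apply Finset.sum_nonneg; intro a _
  exact mul_nonneg (mul_nonneg (hd.1 s) ((hπ s).1 a)) (hr0 s a)

lemma erw_le_one (hπ : IsPolicy π) {d : S → ℝ} (hd : IsDist d)
    (hr1 : ∀ s a, r s a ≤ 1) :
    ∑ s, ∑ a, d s * π s a * r s a ≤ 1 := by
  calc ∑ s, ∑ a, d s * π s a * r s a ≤ ∑ s, ∑ a, d s * π s a := by
        apply Finset.sum_le_sum; intro s _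
        apply Finset.sum_le_sum; intro a _
        have h := mul_nonneg (hd.1 s) ((hπ s).1 a)
        calc d s * π s a * r s a ≤ d s * π s a * 1 :=
              mul_le_mul_of_nonneg_left (hr1 s a) h
          _ = d s * π s a := mul_one _
    _ = 1 := by
        simp only [← Finset.mul_sum]
        simp only [fun s => (hπ s).2, mul_one, hd.2]

lemma summable_value (hP : IsKernel P) (hπ : IsPolicy π) {d : S → ℝ} (hd : IsDist d)
    (hγ0 : 0 ≤ γ) (hγ1 : γ < 1) (hr0 : ∀ s a, 0 ≤ r s a) (hr1 : ∀ s a, r s a ≤ 1) :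
    Summable (fun t : ℕ => γ ^ t * ∑ s, ∑ a, distAt P π d t s * π s a * r s a) := by
  apply Summable.of_nonneg_of_le
    (fun t => mul_nonneg (pow_nonneg hγ0 t)
      (erw_nonneg hπ (distAt_isDist hP hπ hd t) hr0))
    (fun t => ?_) (summable_geometric_of_lt_one hγ0 hγ1)
  calc γ ^ t * ∑ s, ∑ a, distAt P π d t s * π s a * r s a
      ≤ γ ^ t * 1 := mul_le_mul_of_nonneg_left
        (erw_le_one hπ (distAt_isDist hP hπ hd t) hr1) (pow_nonneg hγ0 t)
    _ = γ ^ t := mul_one _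

lemma value_rec (hP : IsKernel P) (hπ : IsPolicy π) {d : S → ℝ} (hd : IsDist d)
    (hγ0 : 0 ≤ γ) (hγ1 : γ < 1) (hr0 : ∀ s a, 0 ≤ r s a) (hr1 : ∀ s a, r s a ≤ 1) :
    value P π r γ d = (∑ s, ∑ a, d s * π s a * r s a)
      + γ * value P π r γ (step P π d) := by
  have hsum := summable_value hP hπ hd hγ0 hγ1 hr0 hr1
  unfold value
  rw [Summable.tsum_eq_zero_add hsum]
  congr 1
  · simp [distAt]
  · have hshift : ∀ t : ℕ, distAt P π d (t + 1) = distAt P π (step P π d) t := by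
      intro t; simp [distAt, Function.iterate_succ_apply]
    rw [← tsum_mul_left]
    congr 1; ext t
    rw [hshift t]; ring

lemma distAt_linear (t : ℕ) (d : S → ℝ) (s' : S) :
    distAt P π d t s' = ∑ s0, d s0 * distAt P π (pureDist s0) t s' := by
  induction t generalizing d with
  | zero =>
      simp only [distAt, Function.iterate_zero, id_eq, pureDist]
      rw [Finset.sum_eq_single s']
      · simp
      · intro b _ hb; simp [Ne.symm hb]
      · intro h; exact absurd (Finset.mem_univ s') h
  | succ n ih =>
      have hs : ∀ e : S → ℝ, distAt P π e (n + 1) = distAt P π (step P π e) n := by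
        intro e; simp [distAt, Function.iterate_succ_apply]
      rw [hs, ih]
      have hstep : ∀ s0 : S, step P π d s0 = ∑ s, d s * step P π (pureDist s) s0 := by
        intro s0
        have hsp : ∀ s : S, step P π (pureDist s) s0 = ∑ a, π s a * P s a s0 := by
          intro s
          simp only [step]
          rw [Finset.sum_eq_single s]
          · apply Finset.sum_congr rfl; intro a _; simp [pureDist]
          · intro b _ hb; apply Finset.sum_eq_zero; intro a _; simp [pureDist, hb]
          · intro h; exact absurd (Finset.mem_univ s) h
        simp only [hsp]
        simp only [step]
        apply Finset.sum_congr rfl; intro s _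
        rw [Finset.mul_sum]
        apply Finset.sum_congr rfl; intro a _
        ring
      calc ∑ s0, step P π d s0 * distAt P π (pureDist s0) n s'
          = ∑ s0, ∑ s, d s * step P π (pureDist s) s0 * distAt P π (pureDist s0) n s' := by
            apply Finset.sum_congr rfl; intro s0 _
            rw [hstep s0, Finset.sum_mul]
        _ = ∑ s, ∑ s0, d s * (step P π (pureDist s) s0 * distAt P π (pureDist s0) n s') := by
            rw [Finset.sum_comm]; apply Finset.sum_congr rfl; intro s _
            apply Finset.sum_congr rfl; intro s0 _; ring
        _ = ∑ s, d s * distAt P π (pureDist s) (n + 1) s' := by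
            apply Finset.sum_congr rfl; intro s _
            rw [← Finset.mul_sum, hs (pureDist s), ih]

lemma value_eq_sum (hP : IsKernel P) (hπ : IsPolicy π)
    (hγ0 : 0 ≤ γ) (hγ1 : γ < 1) (hr0 : ∀ s a, 0 ≤ r s a) (hr1 : ∀ s a, r s a ≤ 1)
    (d : S → ℝ) :
    value P π r γ d = ∑ s0, d s0 * vf P π r γ s0 := by
  unfold vf
  conv_lhs => unfold value
  have key : ∀ t : ℕ, γ ^ t * ∑ s, ∑ a, distAt P π d t s * π s a * r s a
      = ∑ s0, d s0 * (γ ^ t * ∑ s, ∑ a, distAt P π (pureDist s0) t s * π s a * r s a) := by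
    intro t
    have h1 : ∑ s, ∑ a, distAt P π d t s * π s a * r s a
        = ∑ s0, d s0 * ∑ s, ∑ a, distAt P π (pureDist s0) t s * π s a * r s a := by
      calc ∑ s, ∑ a, distAt P π d t s * π s a * r s a
          = ∑ s, ∑ a, (∑ s0, d s0 * distAt P π (pureDist s0) t s) * π s a * r s a := by
            simp only [← distAt_linear]
        _ = ∑ s, ∑ s0, d s0 * ∑ a, distAt P π (pureDist s0) t s * π s a * r s a := by
            apply Finset.sum_congr rfl; intro s _
            calc ∑ a, (∑ s0, d s0 * distAt P π (pureDist s0) t s) * π s a * r s a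
                = ∑ a, ∑ s0, d s0 * distAt P π (pureDist s0) t s * π s a * r s a := by
                  apply Finset.sum_congr rfl; intro a _
                  rw [Finset.sum_mul, Finset.sum_mul]
              _ = ∑ s0, ∑ a, d s0 * distAt P π (pureDist s0) t s * π s a * r s a :=
                  Finset.sum_comm
              _ = ∑ s0, d s0 * ∑ a, distAt P π (pureDist s0) t s * π s a * r s a := by
                  apply Finset.sum_congr rfl; intro s0 _
                  rw [Finset.mul_sum]
                  apply Finset.sum_congr rfl; intro a _
                  ring
        _ = ∑ s0, d s0 * ∑ s, ∑ a, distAt P π (pureDist s0) t s * π s a * r s a := by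
            rw [Finset.sum_comm]
            apply Finset.sum_congr rfl; intro s0 _
            rw [Finset.mul_sum]
    rw [h1, Finset.mul_sum]
    apply Finset.sum_congr rfl; intro s0 _; ring
  simp only [key]
  rw [Summable.tsum_finsetSum (fun s0 _ => Summable.mul_left (d s0)
    (summable_value hP hπ (pureDist_isDist s0) hγ0 hγ1 hr0 hr1))]
  apply Finset.sum_congr rfl; intro s0 _
  rw [tsum_mul_left]
  rfl

lemma vf_bellman (hP : IsKernel P) (hπ : IsPolicy π)
    (hγ0 : 0 ≤ γ) (hγ1 : γ < 1) (hr0 : ∀ s a, 0 ≤ r s a) (hr1 : ∀ s a, r s a ≤ 1)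
    (s : S) :
    vf P π r γ s = ∑ a, π s a * (r s a + γ * ∑ s', P s a s' * vf P π r γ s') := by
  have h1 : vf P π r γ s = (∑ a, π s a * r s a)
      + γ * ∑ s', step P π (pureDist s) s' * vf P π r γ s' := by
    conv_lhs => unfold vf
    rw [value_rec hP hπ (pureDist_isDist s) hγ0 hγ1 hr0 hr1,
      value_eq_sum hP hπ hγ0 hγ1 hr0 hr1]
    congr 1
    rw [Finset.sum_eq_single s]
    · apply Finset.sum_congr rfl; intro a _; simp [pureDist]
    · intro b _ hb
      apply Finset.sum_eq_zero; intro a _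
      simp [pureDist, hb]
    · intro h; exact absurd (Finset.mem_univ s) h
  have h3 : ∀ s' : S, (∑ s0, ∑ a, pureDist s s0 * π s0 a * P s0 a s')
      = ∑ a, π s a * P s a s' := by
    intro s'
    rw [Finset.sum_eq_single s]
    · apply Finset.sum_congr rfl; intro a _; simp [pureDist]
    · intro b _ hb
      apply Finset.sum_eq_zero; intro a _
      simp [pureDist, hb]
    · intro h; exact absurd (Finset.mem_univ s) h
  have h2 : ∑ s', step P π (pureDist s) s' * vf P π r γ s'
      = ∑ a, π s a * ∑ s', P s a s' * vf P π r γ s' := by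
    simp only [step, h3, Finset.sum_mul]
    rw [Finset.sum_comm]
    apply Finset.sum_congr rfl; intro a _
    rw [Finset.mul_sum]
    apply Finset.sum_congr rfl; intro s' _
    ring
  rw [h1, h2, Finset.mul_sum, ← Finset.sum_add_distrib]
  apply Finset.sum_congr rfl; intro a _; ring

end Helpers

/-- a `σ`-admissible `Q̄` dominates `Q̄^μ` up to `σ/(1−γ)` on safe state-actions. -/
theorem stmt_1
    (P : S → A → S → ℝ) (γ : ℝ) (sbad sabs : S)
    (Qb μ : S → A → ℝ) (η σ : ℝ)
    (hP : IsKernel P) (hγ0 : 0 ≤ γ) (hγ1 : γ < 1)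
    (hne : sbad ≠ sabs)
    (hPbad : ∀ a, P sbad a = pureDist sabs)
    (hPabs : ∀ a, P sabs a = pureDist sabs)
    (hμ : IsPolicy μ)
    (hQbad : ∀ a : A, Qb sbad a = 1) (hQabs : ∀ a : A, Qb sabs a = 0)
    (hη0 : 0 ≤ η) (hη1 : η ≤ 1) (hσ : 0 ≤ σ)
    (hadm : SigmaAdmissible P Qb μ γ σ sbad sabs) :
    ∀ s, s ≠ sbad → s ≠ sabs → ∀ a : A,
      qf P μ (cost sbad) γ s a ≤ Qb s a + σ / (1 - γ) := by
  haveI : Nonempty S := ⟨sbad⟩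
  have h1γ : (0:ℝ) < 1 - γ := by linarith
  have hr0 : ∀ (s : S) (a : A), 0 ≤ cost sbad s a := by
    intro s a; unfold cost; split <;> norm_num
  have hr1 : ∀ (s : S) (a : A), cost sbad s a ≤ 1 := by
    intro s a; unfold cost; split <;> norm_num
  set V : S → ℝ := vf P μ (cost sbad) γ with hVdef
  have hBell : ∀ s, V s = ∑ a, μ s a * (cost sbad s a + γ * ∑ s', P s a s' * V s') :=
    fun s => vf_bellman hP hμ hγ0 hγ1 hr0 hr1 s
  have hσγ : 0 ≤ σ / (1 - γ) := div_nonneg hσ h1γ.le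
  have harith : σ + γ * (σ / (1 - γ)) = σ / (1 - γ) := by
    have hne' : (1 - γ) ≠ 0 := ne_of_gt h1γ
    field_simp
    ring
  have hVabs : V sabs = 0 := by
    have e : ∀ a : A, μ sabs a * (cost sbad sabs a + γ * ∑ s', P sabs a s' * V s')
        = μ sabs a * (γ * V sabs) := by
      intro a
      rw [hPabs a, sum_pureDist_mul]
      have : cost sbad sabs a = 0 := by simp [cost, Ne.symm hne]
      rw [this, zero_add]
    have h := hBell sabs
    rw [Finset.sum_congr rfl (fun a _ => e a), ← Finset.sum_mul, (hμ sabs).2, one_mul] at h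
    have h2 : V sabs * (1 - γ) = 0 := by linarith
    rcases mul_eq_zero.1 h2 with h3 | h3
    · exact h3
    · exact absurd h3 (ne_of_gt h1γ)
  have hVbad : V sbad = 1 := by
    have e : ∀ a : A, μ sbad a * (cost sbad sbad a + γ * ∑ s', P sbad a s' * V s')
        = μ sbad a := by
      intro a
      rw [hPbad a, sum_pureDist_mul, hVabs]
      have : cost sbad sbad a = 1 := by simp [cost]
      rw [this]; ring
    have h := hBell sbad
    rw [Finset.sum_congr rfl (fun a _ => e a), (hμ sbad).2] at h
    exact h
  have hQpolbad : Qpol Qb μ sbad = 1 := by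
    unfold Qpol
    simp only [hQbad, mul_one]
    exact (hμ sbad).2
  have hQpolabs : Qpol Qb μ sabs = 0 := by
    unfold Qpol
    simp [hQabs]
  set M : ℝ := Finset.univ.sup' Finset.univ_nonempty
    (fun s => V s - (Qpol Qb μ s + σ / (1 - γ))) with hMdef
  set K : ℝ := max M 0 with hKdef
  have hK0 : 0 ≤ K := le_max_right M 0
  have hVK : ∀ s, V s ≤ Qpol Qb μ s + (σ / (1 - γ) + K) := by
    intro s
    have h1 : V s - (Qpol Qb μ s + σ / (1 - γ)) ≤ M := by
      rw [hMdef]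
      exact Finset.le_sup' (fun s => V s - (Qpol Qb μ s + σ / (1 - γ))) (Finset.mem_univ s)
    have h2 : M ≤ K := le_max_left M 0
    linarith
  have key : ∀ s, V s ≤ Qpol Qb μ s + (σ / (1 - γ) + γ * K) := by
    intro s
    have hγK : 0 ≤ γ * K := mul_nonneg hγ0 hK0
    by_cases hb : s = sbad
    · subst hb; rw [hVbad, hQpolbad]; linarith
    by_cases ha : s = sabs
    · subst ha; rw [hVabs, hQpolabs]; linarith
    have hterm : ∀ a : A, cost sbad s a + γ * ∑ s', P s a s' * V s'
        ≤ Qb s a + (σ / (1 - γ) + γ * K) := by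
      intro a
      have hPV : ∑ s', P s a s' * V s'
          ≤ ∑ s', P s a s' * (Qpol Qb μ s' + (σ / (1 - γ) + K)) :=
        Finset.sum_le_sum fun s' _ =>
          mul_le_mul_of_nonneg_left (hVK s') ((hP s a).1 s')
      have hsplit : ∑ s', P s a s' * (Qpol Qb μ s' + (σ / (1 - γ) + K))
          = (∑ s', P s a s' * Qpol Qb μ s') + (σ / (1 - γ) + K) := by
        have e : ∀ s' : S, P s a s' * (Qpol Qb μ s' + (σ / (1 - γ) + K))
            = P s a s' * Qpol Qb μ s' + P s a s' * (σ / (1 - γ) + K) :=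
          fun s' => by ring
        rw [Finset.sum_congr rfl (fun s' _ => e s'), Finset.sum_add_distrib,
          ← Finset.sum_mul, (hP s a).2, one_mul]
      have hadm' := (hadm s hb ha a).2
      have hmono : γ * ∑ s', P s a s' * V s'
          ≤ γ * ((∑ s', P s a s' * Qpol Qb μ s') + (σ / (1 - γ) + K)) := by
        rw [← hsplit]; exact mul_le_mul_of_nonneg_left hPV hγ0
      nlinarith [harith]
    have hsum : ∑ a, μ s a * (cost sbad s a + γ * ∑ s', P s a s' * V s')
        ≤ ∑ a, μ s a * (Qb s a + (σ / (1 - γ) + γ * K)) :=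
      Finset.sum_le_sum fun a _ =>
        mul_le_mul_of_nonneg_left (hterm a) ((hμ s).1 a)
    have hsum2 : ∑ a, μ s a * (Qb s a + (σ / (1 - γ) + γ * K))
        = Qpol Qb μ s + (σ / (1 - γ) + γ * K) := by
      have e : ∀ a : A, μ s a * (Qb s a + (σ / (1 - γ) + γ * K))
          = μ s a * Qb s a + μ s a * (σ / (1 - γ) + γ * K) := fun a => by ring
      rw [Finset.sum_congr rfl (fun a _ => e a), Finset.sum_add_distrib,
        ← Finset.sum_mul, (hμ s).2, one_mul]
      rfl
    rw [hBell s]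
    rw [hsum2] at hsum
    exact hsum
  have hM : M ≤ γ * K := by
    apply Finset.sup'_le
    intro s _
    have := key s
    linarith
  have hKle : K ≤ 0 := by
    have h1 : K ≤ γ * K := max_le hM (mul_nonneg hγ0 hK0)
    nlinarith
  have hfinal : ∀ s, V s ≤ Qpol Qb μ s + σ / (1 - γ) := by
    intro s
    have h1 : V s - (Qpol Qb μ s + σ / (1 - γ)) ≤ M := by
      rw [hMdef]
      exact Finset.le_sup' (fun s => V s - (Qpol Qb μ s + σ / (1 - γ))) (Finset.mem_univ s)
    have h2 : M ≤ K := le_max_left M 0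
    linarith
  intro s hb ha a
  unfold qf
  have hPV : ∑ s', P s a s' * V s'
      ≤ ∑ s', P s a s' * (Qpol Qb μ s' + σ / (1 - γ)) :=
    Finset.sum_le_sum fun s' _ =>
      mul_le_mul_of_nonneg_left (hfinal s') ((hP s a).1 s')
  have hsplit : ∑ s', P s a s' * (Qpol Qb μ s' + σ / (1 - γ))
      = (∑ s', P s a s' * Qpol Qb μ s') + σ / (1 - γ) := by
    have e : ∀ s' : S, P s a s' * (Qpol Qb μ s' + σ / (1 - γ))
        = P s a s' * Qpol Qb μ s' + P s a s' * (σ / (1 - γ)) := fun s' => by ring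
    rw [Finset.sum_congr rfl (fun s' _ => e s'), Finset.sum_add_distrib,
      ← Finset.sum_mul, (hP s a).2, one_mul]
  have hadm' := (hadm s hb ha a).2
  have hmono : γ * ∑ s', P s a s' * vf P μ (cost sbad) γ s'
      ≤ γ * ((∑ s', P s a s' * Qpol Qb μ s') + σ / (1 - γ)) := by
    rw [← hsplit]
    exact mul_le_mul_of_nonneg_left hPV hγ0
  nlinarith [harith]

end SafeRL
end
end

section
/- Let G_1, …, G_K be intervention rules with common threshold η, where each G_k = (Q̄_k, μ_k, η) is σ_k-admissible. Define Q̄_min(s,a) = min_{1≤k≤K} Q̄_k(s,a), let μ_min be any deterministic policy with μ_min(s) ∈ argmin_{a ∈ A} Q̄_min(s,a) for every s, and let σ_max = max_{1≤k≤K} σ_k. Then the intervention rule (Q̄_min, μ_min, η) is σ_max-admissible. -/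
open scoped BigOperators Classical

noncomputable section

namespace SafeRL

variable {S A : Type*} [Fintype S] [Fintype A] [Nonempty A]

/-- the composite intervention rule `(Q̄_min, μ_min, η)` is `σ_max`-admissible. -/
theorem stmt_3
    (P : S → A → S → ℝ) (γ : ℝ) (sbad sabs : S) (η : ℝ)
    (K : ℕ) (hK0 : 0 < K)
    (Qb : Fin K → S → A → ℝ) (μ : Fin K → S → A → ℝ) (σ : Fin K → ℝ)
    (Qmin : S → A → ℝ) (μmin : S → A) (σmax : ℝ)
    (hP : IsKernel P) (hγ0 : 0 ≤ γ) (hγ1 : γ < 1)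
    (hne : sbad ≠ sabs)
    (hPbad : ∀ a, P sbad a = pureDist sabs)
    (hPabs : ∀ a, P sabs a = pureDist sabs)
    (hμ : ∀ k, IsPolicy (μ k))
    (hQbad : ∀ k (a : A), Qb k sbad a = 1) (hQabs : ∀ k (a : A), Qb k sabs a = 0)
    (hσ : ∀ k, 0 ≤ σ k)
    (hadm : ∀ k, SigmaAdmissible P (Qb k) (μ k) γ (σ k) sbad sabs)
    (hQmin : ∀ s a, (∃ k, Qmin s a = Qb k s a) ∧ ∀ k, Qmin s a ≤ Qb k s a)
    (hμmin : ∀ s a, Qmin s (μmin s) ≤ Qmin s a)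
    (hσmax : (∃ k, σmax = σ k) ∧ ∀ k, σ k ≤ σmax)
    (hη0 : 0 ≤ η) (hη1 : η ≤ 1) :
    SigmaAdmissible P Qmin (detPol μmin) γ σmax sbad sabs := by
  have hQpolmin : ∀ s', Qpol Qmin (detPol μmin) s' = Qmin s' (μmin s') := by
    intro s'
    simp [Qpol, detPol]
  intro s hsb hsa a
  obtain ⟨k, hk⟩ := (hQmin s a).1
  obtain ⟨⟨h0, h1⟩, hbell⟩ := hadm k s hsb hsa a
  refine ⟨⟨hk ▸ h0, hk ▸ h1⟩, ?_⟩
  have hle : ∀ s', Qpol Qmin (detPol μmin) s' ≤ Qpol (Qb k) (μ k) s' := by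
    intro s'
    rw [hQpolmin]
    have hsum := (hμ k s').2
    calc Qmin s' (μmin s') = ∑ a', μ k s' a' * Qmin s' (μmin s') := by
          rw [← Finset.sum_mul, hsum, one_mul]
      _ ≤ ∑ a', μ k s' a' * Qb k s' a' := by
          apply Finset.sum_le_sum
          intro a' _
          exact mul_le_mul_of_nonneg_left
            ((hμmin s' a').trans ((hQmin s' a').2 k)) ((hμ k s').1 a')
      _ = Qpol (Qb k) (μ k) s' := rfl
  calc cost sbad s a + γ * ∑ s', P s a s' * Qpol Qmin (detPol μmin) s'
      ≤ cost sbad s a + γ * ∑ s', P s a s' * Qpol (Qb k) (μ k) s' := by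
        gcongr with s' _
        · exact (hP s a).1 _
        · exact hle s'
    _ ≤ Qb k s a + σ k := hbell
    _ ≤ Qmin s a + σmax := by rw [hk]; exact add_le_add le_rfl (hσmax.2 k)

end SafeRL
end
end

section
/- Define the Bellman optimality operator of the cost-based MDP by (T̄Q)(s,a) = c(s,a) + γ·E_{s'∼P(·|s,a)}[min_{a'} Q(s',a')]. If the intervention rule (Q̄, μ, η) is σ-admissible (with Q̄ extended to unsafe states by Q̄(s_▷,·)=1, Q̄(s_∘,·)=0, an extension preserved by T̄), then for every k ≥ 0 the intervention rule (T̄^k Q̄, μ^k, η) is γ^k·σ-admissible, where μ^k is any deterministic policy with μ^k(s) ∈ argmin_{a ∈ A} (T̄^k Q̄)(s,a) for every s. -/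
open scoped BigOperators Classical

noncomputable section

namespace SafeRL

variable {S A : Type*} [Fintype S] [Fintype A] [Nonempty A]

/-- value iteration: if `(Q̄, μ, η)` is `σ`-admissible then
`(T̄^k Q̄, μ^k, η)` is `γ^k σ`-admissible for every `k`. -/
theorem stmt_4
    (P : S → A → S → ℝ) (γ : ℝ) (sbad sabs : S) (η : ℝ)
    (Qb μ : S → A → ℝ) (σ : ℝ) (μk : ℕ → S → A)
    (hP : IsKernel P) (hγ0 : 0 ≤ γ) (hγ1 : γ < 1)
    (hne : sbad ≠ sabs)
    (hPbad : ∀ a, P sbad a = pureDist sabs)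
    (hPabs : ∀ a, P sabs a = pureDist sabs)
    (hμ : IsPolicy μ)
    (hQbad : ∀ a : A, Qb sbad a = 1) (hQabs : ∀ a : A, Qb sabs a = 0)
    (hσ : 0 ≤ σ)
    (hadm : SigmaAdmissible P Qb μ γ σ sbad sabs)
    (hη0 : 0 ≤ η) (hη1 : η ≤ 1)
    (hgreedy : ∀ (k : ℕ) (s : S) (a : A),
      (Tbar P sbad γ)^[k] Qb s (μk k s) ≤ (Tbar P sbad γ)^[k] Qb s a) :
    ∀ k : ℕ,
      SigmaAdmissible P ((Tbar P sbad γ)^[k] Qb) (detPol (μk k)) γ (γ ^ k * σ)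
        sbad sabs := by
  set T := Tbar P sbad γ with hT
  set Q : ℕ → S → A → ℝ := fun k => T^[k] Qb with hQdef
  have hγ1' : γ ≤ 1 := le_of_lt hγ1
  have hsum_pure : ∀ (f : S → ℝ) (s0 : S), ∑ s', pureDist s0 s' * f s' = f s0 := by
    intro f s0; simp [pureDist, ite_mul]
  have hQsucc : ∀ k s a, Q (k + 1) s a =
      cost sbad s a + γ * ∑ s', P s a s' *
        Finset.univ.inf' Finset.univ_nonempty (fun a' => Q k s' a') := by
    intro k s a
    simp only [hQdef, Function.iterate_succ_apply', hT, Tbar]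
  -- Invariant
  have hInv : ∀ k, (∀ a : A, Q k sbad a = 1) ∧ (∀ a : A, Q k sabs a = 0) ∧
      (∀ s, s ≠ sbad → s ≠ sabs → ∀ a : A, 0 ≤ Q k s a ∧ Q k s a ≤ γ) := by
    intro k
    induction k with
    | zero => exact ⟨hQbad, hQabs, fun s h1 h2 a => (hadm s h1 h2 a).1⟩
    | succ k ih =>
      obtain ⟨ib, ia, is⟩ := ih
      have habs0 : Finset.univ.inf' Finset.univ_nonempty (fun a' => Q k sabs a') = 0 := by
        have h : (fun a' : A => Q k sabs a') = fun _ => (0 : ℝ) := funext ia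
        rw [h, Finset.inf'_const]
      have hlow : ∀ s' a, 0 ≤ Q k s' a := by
        intro s' a
        by_cases h1 : s' = sbad
        · rw [h1, ib]; norm_num
        by_cases h2 : s' = sabs
        · rw [h2, ia]
        · exact (is s' h1 h2 a).1
      have hup : ∀ s' a, Q k s' a ≤ 1 := by
        intro s' a
        by_cases h1 : s' = sbad
        · rw [h1, ib]
        by_cases h2 : s' = sabs
        · rw [h2, ia]; norm_num
        · exact le_trans (is s' h1 h2 a).2 hγ1'
      have hinf0 : ∀ s', 0 ≤ Finset.univ.inf' Finset.univ_nonempty (fun a' => Q k s' a') :=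
        fun s' => Finset.le_inf' _ _ (fun a _ => hlow s' a)
      have hinf1 : ∀ s', Finset.univ.inf' Finset.univ_nonempty (fun a' => Q k s' a') ≤ 1 := by
        intro s'
        obtain ⟨a⟩ : Nonempty A := inferInstance
        exact le_trans (Finset.inf'_le _ (Finset.mem_univ a)) (hup s' a)
      refine ⟨?_, ?_, ?_⟩
      · intro a
        rw [hQsucc, hPbad, hsum_pure, habs0, cost]
        simp
      · intro a
        rw [hQsucc, hPabs, hsum_pure, habs0, cost]
        simp [hne.symm]
      · intro s h1 h2 a
        have hc : cost sbad s a = 0 := by simp [cost, h1]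
        have hs0 : (0:ℝ) ≤ ∑ s', P s a s' *
            Finset.univ.inf' Finset.univ_nonempty (fun a' => Q k s' a') :=
          Finset.sum_nonneg fun s' _ => mul_nonneg ((hP s a).1 s') (hinf0 s')
        have hs1 : ∑ s', P s a s' *
            Finset.univ.inf' Finset.univ_nonempty (fun a' => Q k s' a') ≤ 1 := by
          calc ∑ s', P s a s' *
              Finset.univ.inf' Finset.univ_nonempty (fun a' => Q k s' a')
              ≤ ∑ s', P s a s' * 1 :=
                Finset.sum_le_sum fun s' _ =>
                  mul_le_mul_of_nonneg_left (hinf1 s') ((hP s a).1 s')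
            _ = 1 := by simp [(hP s a).2]
        constructor
        · rw [hQsucc, hc]
          have := mul_nonneg hγ0 hs0
          linarith
        · rw [hQsucc, hc]
          have := mul_le_mul_of_nonneg_left hs1 hγ0
          simp only [mul_one] at this
          linarith
  -- greedy attains the inf
  have hattain : ∀ k s', Finset.univ.inf' Finset.univ_nonempty (fun a' => Q k s' a')
      = Q k s' (μk k s') := by
    intro k s'
    refine le_antisymm (Finset.inf'_le _ (Finset.mem_univ _)) ?_
    exact Finset.le_inf' _ _ fun a _ => hgreedy k s' a
  -- contraction lemma
  have hL : ∀ k s a, Q (k + 1) s a ≤ Q k s a + γ ^ k * σ := by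
    intro k
    induction k with
    | zero =>
      intro s a
      by_cases h1 : s = sbad
      · rw [h1, (hInv 1).1, (hInv 0).1]; simpa using hσ
      by_cases h2 : s = sabs
      · rw [h2, (hInv 1).2.1, (hInv 0).2.1]; simpa using hσ
      · have hinfle : ∀ s', Finset.univ.inf' Finset.univ_nonempty (fun a' => Q 0 s' a')
            ≤ Qpol Qb μ s' := by
          intro s'
          have hQ0 : Q 0 = Qb := rfl
          rw [hQ0]
          calc Finset.univ.inf' Finset.univ_nonempty (fun a' => Qb s' a')
              = ∑ b, μ s' b * Finset.univ.inf' Finset.univ_nonempty (fun a' => Qb s' a') := by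
                rw [← Finset.sum_mul, (hμ s').2, one_mul]
            _ ≤ ∑ b, μ s' b * Qb s' b :=
                Finset.sum_le_sum fun b _ =>
                  mul_le_mul_of_nonneg_left (Finset.inf'_le _ (Finset.mem_univ b)) ((hμ s').1 b)
            _ = Qpol Qb μ s' := rfl
        have hsum : ∑ s', P s a s' *
            Finset.univ.inf' Finset.univ_nonempty (fun a' => Q 0 s' a')
            ≤ ∑ s', P s a s' * Qpol Qb μ s' :=
          Finset.sum_le_sum fun s' _ =>
            mul_le_mul_of_nonneg_left (hinfle s') ((hP s a).1 s')
        have hadm' := (hadm s h1 h2 a).2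
        have hQ0 : Q 0 s a = Qb s a := rfl
        rw [hQsucc, hQ0]
        calc cost sbad s a + γ * ∑ s', P s a s' *
              Finset.univ.inf' Finset.univ_nonempty (fun a' => Q 0 s' a')
            ≤ cost sbad s a + γ * ∑ s', P s a s' * Qpol Qb μ s' := by
              have := mul_le_mul_of_nonneg_left hsum hγ0
              linarith
          _ ≤ Qb s a + σ := hadm'
          _ = Qb s a + γ ^ 0 * σ := by norm_num
    | succ k ih =>
      intro s a
      have hstep : ∀ s', Finset.univ.inf' Finset.univ_nonempty (fun a' => Q (k+1) s' a')
          ≤ Finset.univ.inf' Finset.univ_nonempty (fun a' => Q k s' a') + γ ^ k * σ := by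
        intro s'
        calc Finset.univ.inf' Finset.univ_nonempty (fun a' => Q (k+1) s' a')
            ≤ Q (k+1) s' (μk k s') := Finset.inf'_le _ (Finset.mem_univ _)
          _ ≤ Q k s' (μk k s') + γ ^ k * σ := ih s' (μk k s')
          _ = Finset.univ.inf' Finset.univ_nonempty (fun a' => Q k s' a') + γ ^ k * σ := by
              rw [hattain]
      have hsum : ∑ s', P s a s' *
          Finset.univ.inf' Finset.univ_nonempty (fun a' => Q (k+1) s' a')
          ≤ ∑ s', P s a s' *
            (Finset.univ.inf' Finset.univ_nonempty (fun a' => Q k s' a') + γ ^ k * σ) :=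
        Finset.sum_le_sum fun s' _ =>
          mul_le_mul_of_nonneg_left (hstep s') ((hP s a).1 s')
      have hsplit : ∑ s', P s a s' *
          (Finset.univ.inf' Finset.univ_nonempty (fun a' => Q k s' a') + γ ^ k * σ)
          = (∑ s', P s a s' * Finset.univ.inf' Finset.univ_nonempty (fun a' => Q k s' a'))
            + γ ^ k * σ := by
        simp only [mul_add]
        rw [Finset.sum_add_distrib, ← Finset.sum_mul, (hP s a).2, one_mul]
      rw [hQsucc, hQsucc]
      have := mul_le_mul_of_nonneg_left (le_trans hsum (le_of_eq hsplit)) hγ0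
      have hexp : γ * ((∑ s', P s a s' *
          Finset.univ.inf' Finset.univ_nonempty (fun a' => Q k s' a')) + γ ^ k * σ)
          = γ * (∑ s', P s a s' *
            Finset.univ.inf' Finset.univ_nonempty (fun a' => Q k s' a')) + γ ^ (k+1) * σ := by
        ring
      linarith [hexp ▸ this]
  -- assemble
  intro k s h1 h2 a
  refine ⟨(hInv k).2.2 s h1 h2 a, ?_⟩
  have hQpol : ∀ s', Qpol (Q k) (detPol (μk k)) s' = Q k s' (μk k s') := by
    intro s'; simp [Qpol, detPol, ite_mul]
  have key : cost sbad s a + γ * ∑ s', P s a s' * Qpol (Q k) (detPol (μk k)) s'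
      = Q (k+1) s a := by
    rw [hQsucc]
    congr 1
    congr 1
    apply Finset.sum_congr rfl
    intro s' _
    rw [hQpol, hattain]
  calc cost sbad s a + γ * ∑ s', P s a s' * Qpol (Q k) (detPol (μk k)) s'
      = Q (k+1) s a := key
    _ ≤ Q k s a + γ ^ k * σ := hL k s a

end SafeRL
end
end

section
/- Let the intervention rule G = (Q̄, μ, η) be σ-admissible, and let Q̂ : S_safe × A → [0,γ] satisfy |Q̂(s,a) − Q̄(s,a)| ≤ δ for all s ∈ S_safe and a ∈ A (with Q̂ extended to unsafe states by Q̂(s_▷,·)=1, Q̂(s_∘,·)=0). Then the intervention rule (Q̂, μ, η) is (σ + (1+γ)δ)-admissible. -/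
open scoped BigOperators Classical

noncomputable section

namespace SafeRL

variable {S A : Type*} [Fintype S] [Fintype A] [Nonempty A]

/-- an approximation `Q̂` of a `σ`-admissible `Q̄` with `‖Q̂ − Q̄‖_∞ ≤ δ`
yields a `(σ + (1+γ)δ)`-admissible intervention rule `(Q̂, μ, η)`. -/
theorem stmt_5
    (P : S → A → S → ℝ) (γ : ℝ) (sbad sabs : S) (η : ℝ)
    (Qb Qhat μ : S → A → ℝ) (σ δ : ℝ)
    (hP : IsKernel P) (hγ0 : 0 ≤ γ) (hγ1 : γ < 1)
    (hne : sbad ≠ sabs)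
    (hμ : IsPolicy μ)
    (hQbad : ∀ a : A, Qb sbad a = 1) (hQabs : ∀ a : A, Qb sabs a = 0)
    (hQhbad : ∀ a : A, Qhat sbad a = 1) (hQhabs : ∀ a : A, Qhat sabs a = 0)
    (hσ : 0 ≤ σ)
    (hadm : SigmaAdmissible P Qb μ γ σ sbad sabs)
    (hrange : ∀ s, s ≠ sbad → s ≠ sabs → ∀ a : A, 0 ≤ Qhat s a ∧ Qhat s a ≤ γ)
    (hclose : ∀ s, s ≠ sbad → s ≠ sabs → ∀ a : A, |Qhat s a - Qb s a| ≤ δ)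
    (hη0 : 0 ≤ η) (hη1 : η ≤ 1) :
    SigmaAdmissible P Qhat μ γ (σ + (1 + γ) * δ) sbad sabs := by
  intro s hs1 hs2 a
  refine ⟨hrange s hs1 hs2 a, ?_⟩
  have hδ : 0 ≤ δ := le_trans (abs_nonneg _) (hclose s hs1 hs2 a)
  have hq := (hadm s hs1 hs2 a).2
  have hQb_close : Qb s a ≤ Qhat s a + δ := by
    have := abs_le.mp (hclose s hs1 hs2 a)
    linarith [this.1]
  have hpol : ∀ s', Qpol Qhat μ s' ≤ Qpol Qb μ s' + δ := by
    intro s'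
    by_cases h1 : s' = sbad
    · subst h1
      simp [Qpol, hQhbad, hQbad]; linarith
    by_cases h2 : s' = sabs
    · subst h2
      simp [Qpol, hQhabs, hQabs]; linarith
    · have hdiff : Qpol Qhat μ s' - Qpol Qb μ s'
          = ∑ a', μ s' a' * (Qhat s' a' - Qb s' a') := by
        simp [Qpol, mul_sub, Finset.sum_sub_distrib]
      have hb : ∑ a', μ s' a' * (Qhat s' a' - Qb s' a') ≤ ∑ a', μ s' a' * δ := by
        apply Finset.sum_le_sum
        intro a' _
        have h := abs_le.mp (hclose s' h1 h2 a')
        have hμ0 := (hμ s').1 a'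
        nlinarith [h.2]
      have hsum : ∑ a', μ s' a' * δ = δ := by
        rw [← Finset.sum_mul, (hμ s').2, one_mul]
      linarith
  have hsum : ∑ s', P s a s' * Qpol Qhat μ s'
      ≤ (∑ s', P s a s' * Qpol Qb μ s') + δ := by
    have h1 : ∑ s', P s a s' * Qpol Qhat μ s'
        ≤ ∑ s', P s a s' * (Qpol Qb μ s' + δ) := by
      apply Finset.sum_le_sum
      intro s' _
      exact mul_le_mul_of_nonneg_left (hpol s') ((hP s a).1 s')
    have h2 : ∑ s', P s a s' * (Qpol Qb μ s' + δ)
        = (∑ s', P s a s' * Qpol Qb μ s') + δ := by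
      simp [mul_add, Finset.sum_add_distrib, ← Finset.sum_mul, (hP s a).2]
    linarith
  nlinarith [mul_le_mul_of_nonneg_left hsum hγ0]

end SafeRL
end
end

section
/- Let I ⊆ S_safe × A be partial and F = (S_safe × A) \ I. Given a policy π, let f : (S ∪ {s_†}) × A → ℝ be any nonnegative function vanishing on I such that π_f(a|s) := π(a|s)·1{(s,a) ∈ F} + f(s,a) is a policy (i.e., ∑_a π_f(a|s) = 1 for every state s). Then: (i) d̃^{π_f}(s,a) ≥ d̃^π(s,a) for every (s,a) ∈ F; (ii) d̃^{π_f}(s,a) = 0 for every (s,a) ∈ I; and (iii) if R̃ ≤ 0, then Ṽ^{π_f}(d_0) ≥ Ṽ^π(d_0). -/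
open scoped BigOperators Classical

noncomputable section

namespace SafeRL

variable {S A : Type*} [Fintype S] [Fintype A] [Nonempty A]

/-!
In `M̃` the intervention set leads straight to `s_†`, so mass on `S` can only come from `S` along
pairs outside `I`. Off `I` the policy `π_f` plays every action at least as often as `π`, and at
`s_▷`, `s_∘` the transition does not depend on the action; hence, by induction on time, the state
distribution of `π_f` dominates that of `π` on `S`. Claim (i) follows termwise, (ii) because `π_f`
never plays `I`, and (iii) because rewards off `I` are nonnegative while the penalty `R̃` collected
by `π` on `I` is not positive.
-/

section MarkovChain

omit [Nonempty A]

variable {P : S → A → S → ℝ} {π π' : S → A → ℝ} {d d0 : S → ℝ} {γ : ℝ}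

theorem IsDist.le_one (hd : IsDist d) (s : S) : d s ≤ 1 :=
  hd.2 ▸ Finset.single_le_sum (fun s _ => hd.1 s) (Finset.mem_univ s)

omit [Fintype S] in
theorem IsPolicy.le_one (hπ : IsPolicy π) (s : S) (a : A) : π s a ≤ 1 :=
  (hπ s).2 ▸ Finset.single_le_sum (fun a _ => (hπ s).1 a) (Finset.mem_univ a)

theorem step_apply (s' : S) : step P π d s' = ∑ s, d s * ∑ a, π s a * P s a s' := by
  simp only [step, Finset.mul_sum, mul_assoc]

theorem distAt_succ (t : ℕ) : distAt P π d0 (t + 1) = step P π (distAt P π d0 t) :=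
  Function.iterate_succ_apply' _ _ _

theorem step_nonneg (hP : ∀ s a s', 0 ≤ P s a s') (hπ : ∀ s a, 0 ≤ π s a)
    (hd : ∀ s, 0 ≤ d s) (s' : S) : 0 ≤ step P π d s' :=
  Finset.sum_nonneg fun s _ => Finset.sum_nonneg fun a _ =>
    mul_nonneg (mul_nonneg (hd s) (hπ s a)) (hP s a s')

theorem distAt_nonneg (hP : ∀ s a s', 0 ≤ P s a s') (hπ : ∀ s a, 0 ≤ π s a)
    (hd0 : ∀ s, 0 ≤ d0 s) (t : ℕ) : ∀ s, 0 ≤ distAt P π d0 t s := by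
  induction t with
  | zero => exact hd0
  | succ t ih => rw [distAt_succ]; exact step_nonneg hP hπ ih

theorem isDist_step (hP : IsKernel P) (hπ : IsPolicy π) (hd : IsDist d) :
    IsDist (step P π d) := by
  refine ⟨step_nonneg (fun s a => (hP s a).1) (fun s => (hπ s).1) hd.1, ?_⟩
  calc ∑ s', step P π d s' = ∑ s, ∑ a, d s * π s a * ∑ s', P s a s' := by
        simp only [step, Finset.mul_sum]
        rw [Finset.sum_comm]
        exact Finset.sum_congr rfl fun s _ => Finset.sum_comm
    _ = 1 := by simp [(hP _ _).2, (hπ _).2, ← Finset.mul_sum, hd.2]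

theorem isDist_distAt (hP : IsKernel P) (hπ : IsPolicy π) (hd0 : IsDist d0) (t : ℕ) :
    IsDist (distAt P π d0 t) := by
  induction t with
  | zero => exact hd0
  | succ t ih => rw [distAt_succ]; exact isDist_step hP hπ ih

theorem abs_expectedReward_le {r : S → A → ℝ} {B : ℝ} (hd : IsDist d) (hπ : IsPolicy π)
    (hr : ∀ s a, |r s a| ≤ B) : |∑ s, ∑ a, d s * π s a * r s a| ≤ B :=
  calc |∑ s, ∑ a, d s * π s a * r s a| ≤ ∑ s, ∑ a, |d s * π s a * r s a| :=
        (Finset.abs_sum_le_sum_abs _ _).trans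
          (Finset.sum_le_sum fun s _ => Finset.abs_sum_le_sum_abs _ _)
    _ ≤ ∑ s, ∑ a, d s * π s a * B := by
        refine Finset.sum_le_sum fun s _ => Finset.sum_le_sum fun a _ => ?_
        have hdπ : 0 ≤ d s * π s a := mul_nonneg (hd.1 s) ((hπ s).1 a)
        rw [abs_mul, abs_of_nonneg hdπ]
        exact mul_le_mul_of_nonneg_left (hr s a) hdπ
    _ = B := by simp [← Finset.sum_mul, ← Finset.mul_sum, (hπ _).2, hd.2]

theorem summable_geometric_mul_of_abs_le {x : ℕ → ℝ} {B : ℝ} (hγ0 : 0 ≤ γ) (hγ1 : γ < 1)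
    (hx : ∀ t, |x t| ≤ B) : Summable fun t => γ ^ t * x t :=
  Summable.of_norm_bounded ((summable_geometric_of_lt_one hγ0 hγ1).mul_right B) fun t => by
    rw [norm_mul, norm_pow, Real.norm_of_nonneg hγ0, Real.norm_eq_abs]
    exact mul_le_mul_of_nonneg_left (hx t) (pow_nonneg hγ0 t)

theorem summable_dsa_terms (hγ0 : 0 ≤ γ) (hγ1 : γ < 1) (hP : IsKernel P) (hπ : IsPolicy π)
    (hd0 : IsDist d0) (s : S) (a : A) :
    Summable fun t => γ ^ t * distAt P π d0 t s * π s a := by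
  simp only [mul_assoc]
  refine summable_geometric_mul_of_abs_le hγ0 hγ1 (B := 1) fun t => ?_
  have hD := isDist_distAt hP hπ hd0 t
  rw [abs_of_nonneg (mul_nonneg (hD.1 s) ((hπ s).1 a))]
  exact mul_le_one₀ (hD.le_one s) ((hπ s).1 a) (hπ.le_one s a)

theorem dsa_le_dsa (hγ0 : 0 ≤ γ) (hγ1 : γ < 1) (hP : IsKernel P) (hπ : IsPolicy π)
    (hπ' : IsPolicy π') (hd0 : IsDist d0) {s : S} {a : A}
    (hD : ∀ t, distAt P π d0 t s ≤ distAt P π' d0 t s) (ha : π s a ≤ π' s a) :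
    dsa P π γ d0 s a ≤ dsa P π' γ d0 s a := by
  refine mul_le_mul_of_nonneg_left ?_ (sub_nonneg.2 hγ1.le)
  refine Summable.tsum_le_tsum (fun t => ?_) (summable_dsa_terms hγ0 hγ1 hP hπ hd0 s a)
    (summable_dsa_terms hγ0 hγ1 hP hπ' hd0 s a)
  exact mul_le_mul (mul_le_mul_of_nonneg_left (hD t) (pow_nonneg hγ0 t)) ha ((hπ s).1 a)
    (mul_nonneg (pow_nonneg hγ0 t) ((isDist_distAt hP hπ' hd0 t).1 s))

theorem value_le_value {r : S → A → ℝ} {B : ℝ} (hγ0 : 0 ≤ γ) (hγ1 : γ < 1) (hP : IsKernel P)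
    (hπ : IsPolicy π) (hπ' : IsPolicy π') (hd0 : IsDist d0) (hr : ∀ s a, |r s a| ≤ B)
    (h : ∀ t, ∑ s, ∑ a, distAt P π d0 t s * π s a * r s a
      ≤ ∑ s, ∑ a, distAt P π' d0 t s * π' s a * r s a) :
    value P π r γ d0 ≤ value P π' r γ d0 :=
  Summable.tsum_le_tsum (fun t => mul_le_mul_of_nonneg_left (h t) (pow_nonneg hγ0 t))
    (summable_geometric_mul_of_abs_le hγ0 hγ1 fun t =>
      abs_expectedReward_le (isDist_distAt hP hπ hd0 t) hπ hr)
    (summable_geometric_mul_of_abs_le hγ0 hγ1 fun t =>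
      abs_expectedReward_le (isDist_distAt hP hπ' hd0 t) hπ' hr)

theorem distAt_le_distAt_of_flow_le {T : Set S} (hP : ∀ s a s', 0 ≤ P s a s')
    (hπ : ∀ s a, 0 ≤ π s a) (hπ' : ∀ s a, 0 ≤ π' s a) (hd0 : ∀ s, 0 ≤ d0 s)
    (hout : ∀ s ∉ T, ∀ a, ∀ s' ∈ T, P s a s' = 0)
    (hflow : ∀ s ∈ T, ∀ s' ∈ T, ∑ a, π s a * P s a s' ≤ ∑ a, π' s a * P s a s') (t : ℕ) :
    ∀ s ∈ T, distAt P π d0 t s ≤ distAt P π' d0 t s := by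
  induction t with
  | zero => exact fun _ _ => le_rfl
  | succ t ih =>
    intro s' hs'
    rw [distAt_succ, distAt_succ, step_apply, step_apply]
    refine Finset.sum_le_sum fun s _ => ?_
    by_cases hs : s ∈ T
    · exact mul_le_mul (ih s hs) (hflow s hs s' hs')
        (Finset.sum_nonneg fun a _ => mul_nonneg (hπ s a) (hP s a s'))
        (distAt_nonneg hP hπ' hd0 t s)
    · simp [hout s hs _ s' hs']

end MarkovChain

section AbsorbingMDP

variable {P : S → A → S → ℝ} {I : Set (S × A)} {π : S → A → ℝ} {π' : Option S → A → ℝ}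
  {sbad sabs : S}

omit [Fintype A] [Nonempty A] in
theorem isKernel_Ptil (hP : IsKernel P) : IsKernel (Ptil P I) := by
  intro s? a
  refine ⟨fun s'? => ?_, ?_⟩
  · rcases s? with _ | s
    · simp only [Ptil]; split_ifs <;> norm_num
    · by_cases h : (s, a) ∈ I
      · simp only [Ptil, if_pos h]; split_ifs <;> norm_num
      · rcases s'? with _ | s' <;> simp [Ptil, h, (hP s a).1]
  · rcases s? with _ | s
    · simp [Ptil]
    · by_cases h : (s, a) ∈ I <;> simp [Ptil, Fintype.sum_option, h, (hP s a).2]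

omit [Fintype S] in
theorem isPolicy_extPol (hπ : IsPolicy π) : IsPolicy (extPol π) := by
  rintro (_ | s)
  · simp [extPol]
  · exact hπ s

omit [Fintype A] [Nonempty A] in
theorem isDist_extDist {d0 : S → ℝ} (hd0 : IsDist d0) : IsDist (extDist d0) :=
  ⟨by rintro (_ | s); exacts [le_rfl, hd0.1 s], by simpa [extDist, Fintype.sum_option] using hd0.2⟩

omit [Fintype S] [Fintype A] [Nonempty A] in
theorem abs_rtil_le {r : S → A → ℝ} {Rt : ℝ} (hr : ∀ s a, 0 ≤ r s a ∧ r s a ≤ 1)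
    (s? : Option S) (a : A) : |rtil r I Rt s? a| ≤ max 1 |Rt| := by
  rcases s? with _ | s
  · simp [rtil]
  · by_cases h : (s, a) ∈ I
    · simp [rtil, h]
    · simp only [rtil, if_neg h, abs_of_nonneg (hr s a).1]
      exact (hr s a).2.trans (le_max_left _ _)

omit [Nonempty A] in
theorem sum_extPol_mul_Ptil_le (hP : IsKernel P) (hPbad : ∀ a, P sbad a = pureDist sabs)
    (hPabs : ∀ a, P sabs a = pureDist sabs) (hI : ∀ p ∈ I, p.1 ≠ sbad ∧ p.1 ≠ sabs)
    (hπ : IsPolicy π) (hπ' : IsPolicy π')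
    (hπ'F : ∀ s a, s ≠ sbad → s ≠ sabs → (s, a) ∉ I → π s a ≤ π' (some s) a) (s s' : S) :
    ∑ a, extPol π (some s) a * Ptil P I (some s) a (some s')
      ≤ ∑ a, π' (some s) a * Ptil P I (some s) a (some s') := by
  by_cases hs : s = sbad ∨ s = sabs
  · -- from `s_▷` and `s_∘` the transition does not depend on the action
    have hconst : ∀ a, Ptil P I (some s) a (some s') = pureDist sabs s' := by
      intro a
      have hsa : (s, a) ∉ I := fun h => hs.elim (hI _ h).1 (hI _ h).2
      rcases hs with rfl | rfl <;> simp [Ptil, hsa, hPbad, hPabs]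
    simp only [hconst, ← Finset.sum_mul, extPol, (hπ s).2, (hπ' (some s)).2, le_refl]
  · obtain ⟨hs1, hs2⟩ := not_or.1 hs
    refine Finset.sum_le_sum fun a _ => ?_
    by_cases h : (s, a) ∈ I
    · simp [Ptil, h]
    · simp only [Ptil, if_neg h]
      exact mul_le_mul_of_nonneg_right (hπ'F s a hs1 hs2 h) ((hP s a).1 s')

theorem distAt_extPol_le (hP : IsKernel P) (hPbad : ∀ a, P sbad a = pureDist sabs)
    (hPabs : ∀ a, P sabs a = pureDist sabs) (hI : ∀ p ∈ I, p.1 ≠ sbad ∧ p.1 ≠ sabs)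
    (hπ : IsPolicy π) (hπ' : IsPolicy π')
    (hπ'F : ∀ s a, s ≠ sbad → s ≠ sabs → (s, a) ∉ I → π s a ≤ π' (some s) a)
    {d0 : Option S → ℝ} (hd0 : ∀ s?, 0 ≤ d0 s?) (t : ℕ) (s : S) :
    distAt (Ptil P I) (extPol π) d0 t (some s) ≤ distAt (Ptil P I) π' d0 t (some s) := by
  have hPtil := isKernel_Ptil (I := I) hP
  refine distAt_le_distAt_of_flow_le (T := Set.range some) (fun s? a => (hPtil s? a).1)
    (fun s? => (isPolicy_extPol hπ s?).1) (fun s? => (hπ' s?).1) hd0 ?_ ?_ t _ ⟨s, rfl⟩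
  · rintro (_ | s) hs a _ ⟨s', rfl⟩
    · simp [Ptil]
    · exact absurd ⟨s, rfl⟩ hs
  · rintro _ ⟨s, rfl⟩ _ ⟨s', rfl⟩
    exact sum_extPol_mul_Ptil_le hP hPbad hPabs hI hπ hπ' hπ'F s s'

omit [Nonempty A] in
theorem expectedReward_rtil_le {r : S → A → ℝ} {Rt : ℝ} {d d' : Option S → ℝ}
    (hRt : Rt ≤ 0) (hr : ∀ s a, 0 ≤ r s a) (hrbad : ∀ a, r sbad a = 0)
    (hrabs : ∀ a, r sabs a = 0) (hI : ∀ p ∈ I, p.1 ≠ sbad ∧ p.1 ≠ sabs) (hπ : IsPolicy π)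
    (hπ'I : ∀ s a, (s, a) ∈ I → π' (some s) a = 0)
    (hπ'F : ∀ s a, s ≠ sbad → s ≠ sabs → (s, a) ∉ I → π s a ≤ π' (some s) a)
    (hd : ∀ s?, 0 ≤ d s?) (hd' : ∀ s?, 0 ≤ d' s?) (hdd' : ∀ s, d (some s) ≤ d' (some s)) :
    ∑ s?, ∑ a, d s? * extPol π s? a * rtil r I Rt s? a
      ≤ ∑ s?, ∑ a, d' s? * π' s? a * rtil r I Rt s? a := by
  simp only [Fintype.sum_option, rtil, mul_zero, Finset.sum_const_zero, zero_add, extPol]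
  refine Finset.sum_le_sum fun s _ => Finset.sum_le_sum fun a _ => ?_
  by_cases h : (s, a) ∈ I
  · simp only [if_pos h, hπ'I s a h, mul_zero, zero_mul]
    exact mul_nonpos_of_nonneg_of_nonpos (mul_nonneg (hd _) ((hπ s).1 a)) hRt
  · simp only [if_neg h]
    by_cases hs : s = sbad ∨ s = sabs
    · rcases hs with rfl | rfl <;> simp [hrbad, hrabs]
    · obtain ⟨hs1, hs2⟩ := not_or.1 hs
      exact mul_le_mul_of_nonneg_right
        (mul_le_mul (hdd' s) (hπ'F s a hs1 hs2 h) ((hπ s).1 a) (hd' _)) (hr s a)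

end AbsorbingMDP

theorem stmt_14_general
    (P : S → A → S → ℝ) (r : S → A → ℝ) (γ : ℝ) (sbad sabs : S) (d0 : S → ℝ)
    (π : S → A → ℝ) (I : Set (S × A)) (Rt : ℝ)
    (f πf : Option S → A → ℝ)
    (hP : IsKernel P) (hγ0 : 0 ≤ γ) (hγ1 : γ < 1)
    (hr : ∀ s a, 0 ≤ r s a ∧ r s a ≤ 1)
    (hPbad : ∀ a, P sbad a = pureDist sabs)
    (hPabs : ∀ a, P sabs a = pureDist sabs)
    (hrbad : ∀ a : A, r sbad a = 0) (hrabs : ∀ a : A, r sabs a = 0)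
    (hd0 : IsDist d0) (hπ : IsPolicy π)
    (hI : ∀ p ∈ I, p.1 ≠ sbad ∧ p.1 ≠ sabs)
    (hf0 : ∀ s? (a : A), 0 ≤ f s? a)
    (hfI : ∀ s a, (s, a) ∈ I → f (some s) a = 0)
    (hπf : ∀ s? (a : A), πf s? a =
      (match s? with
        | none => (0 : ℝ)
        | some s => if s ≠ sbad ∧ s ≠ sabs ∧ (s, a) ∉ I then π s a else 0)
      + f s? a)
    (hpol : ∀ s?, ∑ a, πf s? a = 1) :
    (∀ s a, s ≠ sbad → s ≠ sabs → (s, a) ∉ I →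
        dsa (Ptil P I) (extPol π) γ (extDist d0) (some s) a
          ≤ dsa (Ptil P I) πf γ (extDist d0) (some s) a)
    ∧ (∀ s a, (s, a) ∈ I → dsa (Ptil P I) πf γ (extDist d0) (some s) a = 0)
    ∧ (Rt ≤ 0 →
        value (Ptil P I) (extPol π) (rtil r I Rt) γ (extDist d0)
          ≤ value (Ptil P I) πf (rtil r I Rt) γ (extDist d0)) := by
  have hπf_F : ∀ s a, s ≠ sbad → s ≠ sabs → (s, a) ∉ I → π s a ≤ πf (some s) a :=
    fun s a h1 h2 h3 => by simpa [hπf, h1, h2, h3] using hf0 (some s) a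
  have hπf_I : ∀ s a, (s, a) ∈ I → πf (some s) a = 0 := fun s a h => by simp [hπf, h, hfI s a h]
  have hπf_pol : IsPolicy πf := by
    refine fun s? => ⟨fun a => ?_, hpol s?⟩
    rw [hπf]
    refine add_nonneg ?_ (hf0 s? a)
    rcases s? with _ | s
    · exact le_rfl
    · exact ite_nonneg ((hπ s).1 a) le_rfl
  have hPtil := isKernel_Ptil (I := I) hP
  have hπext := isPolicy_extPol hπ
  have hd0ext := isDist_extDist hd0
  have hD t s := distAt_extPol_le hP hPbad hPabs hI hπ hπf_pol hπf_F hd0ext.1 t s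
  refine ⟨fun s a h1 h2 h3 => ?_, fun s a h => ?_, fun hRt => ?_⟩
  · exact dsa_le_dsa hγ0 hγ1 hPtil hπext hπf_pol hd0ext (hD · s) (hπf_F s a h1 h2 h3)
  · simp [dsa, hπf_I s a h]
  · refine value_le_value hγ0 hγ1 hPtil hπext hπf_pol hd0ext (abs_rtil_le hr) fun t => ?_
    exact expectedReward_rtil_le hRt (fun s a => (hr s a).1) hrbad hrabs hI hπ hπf_I hπf_F
      (isDist_distAt hPtil hπext hd0ext t).1 (isDist_distAt hPtil hπf_pol hd0ext t).1 (hD t)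

/-- properties of the non-intervened policy `π_f`:
(i) `d̃^{π_f} ≥ d̃^π` on `F`; (ii) `d̃^{π_f} = 0` on `I`; (iii) if `R̃ ≤ 0` then
`Ṽ^{π_f}(d₀) ≥ Ṽ^π(d₀)`. -/
theorem stmt_14
    (P : S → A → S → ℝ) (r : S → A → ℝ) (γ : ℝ) (sbad sabs : S) (d0 : S → ℝ)
    (π : S → A → ℝ) (I : Set (S × A)) (Rt : ℝ)
    (f πf : Option S → A → ℝ)
    (hP : IsKernel P) (hγ0 : 0 ≤ γ) (hγ1 : γ < 1)
    (hr : ∀ s a, 0 ≤ r s a ∧ r s a ≤ 1)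
    (hne : sbad ≠ sabs)
    (hPbad : ∀ a, P sbad a = pureDist sabs)
    (hPabs : ∀ a, P sabs a = pureDist sabs)
    (hrbad : ∀ a : A, r sbad a = 0) (hrabs : ∀ a : A, r sabs a = 0)
    (hd0 : IsDist d0) (hπ : IsPolicy π)
    (hI : ∀ p ∈ I, p.1 ≠ sbad ∧ p.1 ≠ sabs)
    (hpartial : ∀ p ∈ I, ∃ a' : A, (p.1, a') ∉ I)
    (hf0 : ∀ s? (a : A), 0 ≤ f s? a)
    (hfI : ∀ s a, (s, a) ∈ I → f (some s) a = 0)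
    (hπf : ∀ s? (a : A), πf s? a =
      (match s? with
        | none => (0 : ℝ)
        | some s => if s ≠ sbad ∧ s ≠ sabs ∧ (s, a) ∉ I then π s a else 0)
      + f s? a)
    (hpol : ∀ s?, ∑ a, πf s? a = 1) :
    (∀ s a, s ≠ sbad → s ≠ sabs → (s, a) ∉ I →
        dsa (Ptil P I) (extPol π) γ (extDist d0) (some s) a
          ≤ dsa (Ptil P I) πf γ (extDist d0) (some s) a)
    ∧ (∀ s a, (s, a) ∈ I → dsa (Ptil P I) πf γ (extDist d0) (some s) a = 0)
    ∧ (Rt ≤ 0 →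
        value (Ptil P I) (extPol π) (rtil r I Rt) γ (extDist d0)
          ≤ value (Ptil P I) πf (rtil r I Rt) γ (extDist d0)) :=
  stmt_14_general P r γ sbad sabs d0 π I Rt f πf hP hγ0 hγ1 hr hPbad hPabs hrbad hrabs hd0 hπ hI hf0
    hfI hπf hpol

end SafeRL
end
end
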